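/- arXiv:2604.13300 — 2 statements merged into one kernel-verified Lean document; each statement's English description precedes it below -/
import Mathlib

section
/- Suppose \Omega \subset \mathbb{R}^2 is a bounded smooth domain and c_1 > 0 is such that \int_\Omega |\partial_{x_i}\partial_{x_j}\rho|^2 \le c_1 \int_\Omega |\Delta\rho|^2 + c_1 \int_\Omega \rho^2 for all \rho \in C^2(\bar\Omega) with \partial\rho/\partial\nu = 0 on \partial\Omega. Then there is \Gamma_3 > 0 (depending only on c_1) such that for all \varphi, \psi \in C^2(\bar\Omega) with \partial\varphi/\partial\nu = \partial\psi/\partial\nu = 0 on \partial\Omega and 0 \le \varphi \le 1: \int_\Omega \varphi^4 |D^2\psi|^2 \le \Gamma_3 \int_\Omega \varphi^4 |\Delta\psi|^2 + \Gamma_3 ( \|D^2\varphi\|_\infty^2 + \|\nabla\varphi\|_\infty^4 + 1 ) \{ \int_{\mathrm{supp}\varphi} |\nabla\psi|^2 + \int_{\mathrm{supp}\varphi} \psi^2 \}. -/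
open MeasureTheory

noncomputable def pd2 (f : EuclideanSpace ℝ (Fin 2) → ℝ)
    (x v w : EuclideanSpace ℝ (Fin 2)) : ℝ :=
  fderiv ℝ (fun y => fderiv ℝ f y w) x v

noncomputable def lap (f : EuclideanSpace ℝ (Fin 2) → ℝ)
    (x : EuclideanSpace ℝ (Fin 2)) : ℝ :=
  ∑ i : Fin 2, pd2 f x (EuclideanSpace.single i (1:ℝ)) (EuclideanSpace.single i (1:ℝ))

noncomputable def hessHS (f : EuclideanSpace ℝ (Fin 2) → ℝ)
    (x : EuclideanSpace ℝ (Fin 2)) : ℝ :=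
  Real.sqrt (∑ i : Fin 2, ∑ j : Fin 2,
    (pd2 f x (EuclideanSpace.single i (1:ℝ)) (EuclideanSpace.single j (1:ℝ)))^2)

abbrev E2 := EuclideanSpace ℝ (Fin 2)

lemma sq4 (a b c d : ℝ) : (a+b+c+d)^2 ≤ 4*(a^2+b^2+c^2+d^2) := by
  nlinarith [sq_nonneg (a-b), sq_nonneg (c-d), sq_nonneg (a+b-c-d)]

lemma sq3 (a b c : ℝ) : (a+b+c)^2 ≤ 3*(a^2+b^2+c^2) := by
  nlinarith [sq_nonneg (a-b), sq_nonneg (a-c), sq_nonneg (b-c)]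

lemma sq2 (a b : ℝ) : (a+b)^2 ≤ 2*(a^2+b^2) := by nlinarith [sq_nonneg (a-b)]

lemma ptwise1 (p P D ui uj vi vj qij s N M1 M2 : ℝ)
    (hp0 : 0 ≤ p) (hp1 : p ≤ 1)
    (hui : ui^2 ≤ M1^2) (huj : uj^2 ≤ M1^2)
    (hvi : vi^2 ≤ N^2) (hvj : vj^2 ≤ N^2)
    (hq : qij^2 ≤ M2^2)
    (hD : D = p*p*P + 2*p*ui*vj + 2*p*uj*vi + (2*ui*uj + 2*p*qij)*s) :
    p^4*P^2 ≤ 4*D^2 + 32*(M1^2*N^2 + (M1^4+M2^2)*s^2) := by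
  have hp2 : p^2 ≤ 1 := by nlinarith
  have hM1nn : (0:ℝ) ≤ M1^2 := le_trans (sq_nonneg _) hui
  have h1 : ui^2*vj^2 ≤ M1^2*N^2 := mul_le_mul hui hvj (sq_nonneg _) hM1nn
  have h2 : uj^2*vi^2 ≤ M1^2*N^2 := mul_le_mul huj hvi (sq_nonneg _) hM1nn
  have h3 : ui^2*uj^2 ≤ M1^2*M1^2 := mul_le_mul hui huj (sq_nonneg _) hM1nn
  have hm1 : p^2*(ui^2*vj^2) ≤ 1*(M1^2*N^2) := mul_le_mul hp2 h1 (by positivity) zero_le_one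
  have hb : (2*p*ui*vj)^2 ≤ 4*(M1^2*N^2) := by
    calc (2*p*ui*vj)^2 = 4*(p^2*(ui^2*vj^2)) := by ring
    _ ≤ 4*(1*(M1^2*N^2)) := by linarith
    _ = 4*(M1^2*N^2) := by ring
  have hm2 : p^2*(uj^2*vi^2) ≤ 1*(M1^2*N^2) := mul_le_mul hp2 h2 (by positivity) zero_le_one
  have hc : (2*p*uj*vi)^2 ≤ 4*(M1^2*N^2) := by
    calc (2*p*uj*vi)^2 = 4*(p^2*(uj^2*vi^2)) := by ring
    _ ≤ 4*(1*(M1^2*N^2)) := by linarith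
    _ = 4*(M1^2*N^2) := by ring
  have hq2 : p^2*qij^2 ≤ 1*M2^2 := mul_le_mul hp2 hq (sq_nonneg _) zero_le_one
  have hd0 : (2*ui*uj + 2*p*qij)^2 ≤ 8*(M1^4+M2^2) := by
    have e1 := sq2 (2*ui*uj) (2*p*qij)
    have e2 : (2*ui*uj)^2 = 4*(ui^2*uj^2) := by ring
    have e3 : (2*p*qij)^2 = 4*(p^2*qij^2) := by ring
    have e4 : M1^2*M1^2 = M1^4 := by ring
    linarith
  have hd : ((2*ui*uj + 2*p*qij)*s)^2 ≤ 8*(M1^4+M2^2)*s^2 := by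
    have e : ((2*ui*uj + 2*p*qij)*s)^2 = (2*ui*uj + 2*p*qij)^2*s^2 := by ring
    rw [e]
    exact mul_le_mul_of_nonneg_right hd0 (sq_nonneg s)
  have hkey := sq4 D (-(2*p*ui*vj)) (-(2*p*uj*vi)) (-((2*ui*uj + 2*p*qij)*s))
  have hkey' : (D + -(2*p*ui*vj) + -(2*p*uj*vi) + -((2*ui*uj + 2*p*qij)*s))^2
      ≤ 4*(D^2 + (2*p*ui*vj)^2 + (2*p*uj*vi)^2 + ((2*ui*uj + 2*p*qij)*s)^2) := by
    calc (D + -(2*p*ui*vj) + -(2*p*uj*vi) + -((2*ui*uj + 2*p*qij)*s))^2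
        ≤ 4*(D^2 + (-(2*p*ui*vj))^2 + (-(2*p*uj*vi))^2 + (-((2*ui*uj + 2*p*qij)*s))^2) := hkey
    _ = 4*(D^2 + (2*p*ui*vj)^2 + (2*p*uj*vi)^2 + ((2*ui*uj + 2*p*qij)*s)^2) := by ring
  have heq : p^4*P^2 = (D + -(2*p*ui*vj) + -(2*p*uj*vi) + -((2*ui*uj + 2*p*qij)*s))^2 := by
    rw [hD]; ring
  rw [heq]
  linarith

lemma ptwise2 (p Lψ L u0 u1 v0 v1 q00 q11 s N M1 M2 : ℝ)
    (hp0 : 0 ≤ p) (hp1 : p ≤ 1)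
    (hu0 : u0^2 ≤ M1^2) (hu1 : u1^2 ≤ M1^2)
    (hv0 : v0^2 ≤ N^2) (hv1 : v1^2 ≤ N^2)
    (hq0 : q00^2 ≤ M2^2) (hq1 : q11^2 ≤ M2^2)
    (hL : L = (p*p*Lψ + 2*p*u0*v0 + 2*p*u0*v0 + (2*u0*u0 + 2*p*q00)*s)
            + (p*p*Lψ + 2*p*u1*v1 + 2*p*u1*v1 + (2*u1*u1 + 2*p*q11)*s) - p*p*Lψ) :
    L^2 ≤ 3*p^4*Lψ^2 + 256*(M1^2*N^2 + (M1^4+M2^2)*s^2) := by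
  have hp2 : p^2 ≤ 1 := by nlinarith
  have hM1nn : (0:ℝ) ≤ M1^2 := le_trans (sq_nonneg _) hu0
  have hNnn : (0:ℝ) ≤ N^2 := le_trans (sq_nonneg _) hv0
  have hM2nn : (0:ℝ) ≤ M2^2 := le_trans (sq_nonneg _) hq0
  have h1 : u0^2*v0^2 ≤ M1^2*N^2 := mul_le_mul hu0 hv0 (sq_nonneg _) hM1nn
  have h2 : u1^2*v1^2 ≤ M1^2*N^2 := mul_le_mul hu1 hv1 (sq_nonneg _) hM1nn
  have h3 : u0^2*u0^2 ≤ M1^2*M1^2 := mul_le_mul hu0 hu0 (sq_nonneg _) hM1nn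
  have h4 : u1^2*u1^2 ≤ M1^2*M1^2 := mul_le_mul hu1 hu1 (sq_nonneg _) hM1nn
  set A := 4*p*(u0*v0+u1*v1) with hAdef
  set B := (2*u0^2+2*u1^2+2*p*q00+2*p*q11)*s with hBdef
  have hs : (u0*v0+u1*v1)^2 ≤ 4*(M1^2*N^2) := by
    have := sq2 (u0*v0) (u1*v1)
    have e1 : (u0*v0)^2 = u0^2*v0^2 := by ring
    have e2 : (u1*v1)^2 = u1^2*v1^2 := by ring
    linarith
  have hms : p^2*(u0*v0+u1*v1)^2 ≤ 1*(4*(M1^2*N^2)) :=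
    mul_le_mul hp2 hs (sq_nonneg _) zero_le_one
  have hA : A^2 ≤ 64*(M1^2*N^2) := by
    calc A^2 = 16*(p^2*(u0*v0+u1*v1)^2) := by rw [hAdef]; ring
    _ ≤ 16*(1*(4*(M1^2*N^2))) := by linarith
    _ = 64*(M1^2*N^2) := by ring
  have hq00 : p^2*q00^2 ≤ 1*M2^2 := mul_le_mul hp2 hq0 (sq_nonneg _) zero_le_one
  have hq11 : p^2*q11^2 ≤ 1*M2^2 := mul_le_mul hp2 hq1 (sq_nonneg _) zero_le_one
  have hB0 : (2*u0^2+2*u1^2+2*p*q00+2*p*q11)^2 ≤ 32*(M1^4+M2^2) := by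
    have hk := sq4 (2*u0^2) (2*u1^2) (2*p*q00) (2*p*q11)
    have e1 : (2*u0^2)^2 = 4*(u0^2*u0^2) := by ring
    have e2 : (2*u1^2)^2 = 4*(u1^2*u1^2) := by ring
    have e3 : (2*p*q00)^2 = 4*(p^2*q00^2) := by ring
    have e4 : (2*p*q11)^2 = 4*(p^2*q11^2) := by ring
    have e5 : M1^2*M1^2 = M1^4 := by ring
    linarith
  have hB : B^2 ≤ 32*(M1^4+M2^2)*s^2 := by
    have e : B^2 = (2*u0^2+2*u1^2+2*p*q00+2*p*q11)^2*s^2 := by rw [hBdef]; ring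
    rw [e]
    exact mul_le_mul_of_nonneg_right hB0 (sq_nonneg s)
  have heq : L = p*p*Lψ + A + B := by rw [hL, hAdef, hBdef]; ring
  have hkey := sq3 (p*p*Lψ) A B
  have hkey' : L^2 ≤ 3*((p*p*Lψ)^2 + A^2 + B^2) := by rw [heq]; exact hkey
  have e6 : (p*p*Lψ)^2 = p^4*Lψ^2 := by ring
  have hnn1 : 0 ≤ M1^2*N^2 := mul_nonneg hM1nn hNnn
  have hnn2 : 0 ≤ (M1^4+M2^2)*s^2 := mul_nonneg (by positivity) (sq_nonneg s)
  linarith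

lemma contdiff_dw {f : E2 → ℝ} (hf : ContDiff ℝ 2 f) (w : E2) :
    ContDiff ℝ 1 (fun y => fderiv ℝ f y w) :=
  (hf.fderiv_right (by norm_num)).clm_apply contDiff_const

lemma cont_pd2 {f : E2 → ℝ} (hf : ContDiff ℝ 2 f) (v w : E2) :
    Continuous fun x => pd2 f x v w := by
  have h : ContDiff ℝ 0 fun x => pd2 f x v w :=
    ((contdiff_dw hf w).fderiv_right (by norm_num)).clm_apply (contDiff_const (c := v))
  exact h.continuous

lemma integrableOn_of_cont {f : E2 → ℝ} (hf : Continuous f) {s : Set E2}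
    (hs : Bornology.IsBounded s) : IntegrableOn f s := by
  exact ((hf.continuousOn).integrableOn_compact hs.isCompact_closure).mono_set subset_closure

lemma pd2_eq_zero_of_nmem {f : E2 → ℝ} {x : E2} (hx : x ∉ tsupport f) (v w : E2) :
    pd2 f x v w = 0 := by
  have hsub : tsupport (fun y => fderiv ℝ f y w) ⊆ tsupport f := by
    apply closure_minimal ?_ (isClosed_tsupport f)
    intro y hy
    have h : fderiv ℝ f y ≠ 0 := fun h => hy (by simp [Function.mem_support, h])
    exact support_fderiv_subset ℝ h
  have h1 : x ∉ tsupport (fun y => fderiv ℝ f y w) := fun h => hx (hsub h)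
  have h2 : fderiv ℝ (fun y => fderiv ℝ f y w) x = 0 :=
    Function.notMem_support.mp (fun h => h1 (support_fderiv_subset ℝ h))
  simp [pd2, h2]

lemma pd2_prod {φ ψ : E2 → ℝ} (hφ : ContDiff ℝ 2 φ) (hψ : ContDiff ℝ 2 ψ)
    (x v w : E2) :
    pd2 (fun y => φ y * φ y * ψ y) x v w =
      φ x * φ x * pd2 ψ x v w
      + 2*(φ x)*(fderiv ℝ φ x v)*(fderiv ℝ ψ x w)
      + 2*(φ x)*(fderiv ℝ φ x w)*(fderiv ℝ ψ x v)
      + (2*(fderiv ℝ φ x v)*(fderiv ℝ φ x w) + 2*(φ x)*(pd2 φ x v w))*(ψ x) := by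
  have hφd : Differentiable ℝ φ := hφ.differentiable two_ne_zero
  have hψd : Differentiable ℝ ψ := hψ.differentiable two_ne_zero
  have hF : (fun y => fderiv ℝ (fun z => φ z * φ z * ψ z) y w)
      = fun y => φ y * φ y * fderiv ℝ ψ y w
        + ψ y * (φ y * fderiv ℝ φ y w + φ y * fderiv ℝ φ y w) := by
    funext y
    have hρy : HasFDerivAt (fun z => φ z * φ z * ψ z)
        ((φ y * φ y) • fderiv ℝ ψ y + ψ y • (φ y • fderiv ℝ φ y + φ y • fderiv ℝ φ y)) y :=
      ((hφd y).hasFDerivAt.mul (hφd y).hasFDerivAt).mul (hψd y).hasFDerivAt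
    rw [hρy.fderiv]
    simp [smul_eq_mul]
    ring
  rw [pd2, hF]
  have hDψw : HasFDerivAt (fun y => fderiv ℝ ψ y w)
      (fderiv ℝ (fun y => fderiv ℝ ψ y w) x) x :=
    (((contdiff_dw hψ w).differentiable one_ne_zero) x).hasFDerivAt
  have hDφw : HasFDerivAt (fun y => fderiv ℝ φ y w)
      (fderiv ℝ (fun y => fderiv ℝ φ y w) x) x :=
    (((contdiff_dw hφ w).differentiable one_ne_zero) x).hasFDerivAt
  have hφx : HasFDerivAt φ (fderiv ℝ φ x) x := (hφd x).hasFDerivAt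
  have hψx : HasFDerivAt ψ (fderiv ℝ ψ x) x := (hψd x).hasFDerivAt
  have hG : HasFDerivAt (fun y => φ y * φ y * fderiv ℝ ψ y w
      + ψ y * (φ y * fderiv ℝ φ y w + φ y * fderiv ℝ φ y w)) _ x := (((hφx.mul hφx).mul hDψw).add
    (hψx.mul ((hφx.mul hDφw).add (hφx.mul hDφw))))
  rw [hG.fderiv]
  simp only [ContinuousLinearMap.add_apply, ContinuousLinearMap.smul_apply, smul_eq_mul, pd2, Pi.mul_apply]
  ring

set_option maxHeartbeats 2000000 in
theorem stmt_10 (Ω : Set (EuclideanSpace ℝ (Fin 2)))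
    (hΩo : IsOpen Ω) (hΩb : Bornology.IsBounded Ω)
    (ν : EuclideanSpace ℝ (Fin 2) → EuclideanSpace ℝ (Fin 2))  -- outward unit normal field
    (c1 : ℝ) (hc1 : 0 < c1)
    (hEll : ∀ ρ : EuclideanSpace ℝ (Fin 2) → ℝ, ContDiff ℝ 2 ρ →
      (∀ x ∈ frontier Ω, fderiv ℝ ρ x (ν x) = 0) →
      ∀ i j : Fin 2,
        ∫ x in Ω, (pd2 ρ x (EuclideanSpace.single i (1:ℝ)) (EuclideanSpace.single j (1:ℝ)))^2
          ≤ c1 * ∫ x in Ω, (lap ρ x)^2 + c1 * ∫ x in Ω, (ρ x)^2) :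
    ∃ Γ3 > (0:ℝ), ∀ φ ψ : EuclideanSpace ℝ (Fin 2) → ℝ,
      ContDiff ℝ 2 φ → ContDiff ℝ 2 ψ →
      (∀ x ∈ frontier Ω, fderiv ℝ φ x (ν x) = 0) →
      (∀ x ∈ frontier Ω, fderiv ℝ ψ x (ν x) = 0) →
      (∀ x, φ x ∈ Set.Icc (0:ℝ) 1) →
      ∀ M1 M2 : ℝ, (∀ x, ‖fderiv ℝ φ x‖ ≤ M1) → (∀ x, hessHS φ x ≤ M2) →
        ∫ x in Ω, (φ x)^4 * (hessHS ψ x)^2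
          ≤ Γ3 * ∫ x in Ω, (φ x)^4 * (lap ψ x)^2
            + Γ3 * (M2^2 + M1^4 + 1) *
                ((∫ x in Ω ∩ tsupport φ, ‖fderiv ℝ ψ x‖^2)
                  + ∫ x in Ω ∩ tsupport φ, (ψ x)^2) := by
  refine ⟨8192*(c1+1)*(c1+1)*((volume Ω).toReal+1)*(1+1/(volume Ω).toReal), ?_, ?_⟩
  · have h0 : (0:ℝ) ≤ 1/(volume Ω).toReal := by positivity
    have A : (0:ℝ) < 8192*(c1+1) := by linarith
    have B : (0:ℝ) < 8192*(c1+1)*(c1+1) := mul_pos A (by linarith)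
    have C : (0:ℝ) < 8192*(c1+1)*(c1+1)*((volume Ω).toReal+1) :=
      mul_pos B (by positivity)
    exact mul_pos C (by positivity)
  intro φ ψ hφ hψ hNφ hNψ hφ01 M1 M2 hM1 hM2
  set voln := (volume Ω).toReal with hvoldef
  have hvnn : (0:ℝ) ≤ voln := by rw [hvoldef]; exact ENNReal.toReal_nonneg
  set Γ0 := 8192*(c1+1)*(c1+1)*(voln+1) with hΓ0def
  set Γ3 := Γ0*(1+1/voln) with hΓdef
  have hΓ0pos : (0:ℝ) < Γ0 := by
    rw [hΓ0def]
    have A : (0:ℝ) < 8192*(c1+1) := by linarith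
    exact mul_pos (mul_pos A (by linarith)) (by linarith)
  have hΓ0big : 8192*(c1+1) ≤ Γ0 := by
    have h1 : (1:ℝ) ≤ (c1+1)*(voln+1) := by nlinarith
    have h2 : (8192*(c1+1))*1 ≤ (8192*(c1+1))*((c1+1)*(voln+1)) :=
      mul_le_mul_of_nonneg_left h1 (by linarith)
    rw [hΓ0def]; nlinarith [h2]
  by_cases hμ0 : volume Ω = 0
  · have h1 : volume.restrict Ω = 0 := Measure.restrict_eq_zero.mpr hμ0
    simp [h1]
  have hfin : volume Ω < ⊤ := hΩb.measure_lt_top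
  have hvolpos : 0 < voln := by rw [hvoldef]; exact ENNReal.toReal_pos hμ0 hfin.ne
  set S : Fin 2 → E2 := fun i => EuclideanSpace.single i (1:ℝ) with hSdef
  set T := tsupport φ with hTdef
  have hTm : MeasurableSet T := (isClosed_tsupport φ).measurableSet
  have hΩm : MeasurableSet Ω := hΩo.measurableSet
  have hΩTb : Bornology.IsBounded (Ω ∩ T) := hΩb.subset Set.inter_subset_left
  set ρ := fun y => φ y * φ y * ψ y with hρdef
  have hρ2 : ContDiff ℝ 2 ρ := (hφ.mul hφ).mul hψ
  have hφd : Differentiable ℝ φ := hφ.differentiable two_ne_zero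
  have hψd : Differentiable ℝ ψ := hψ.differentiable two_ne_zero
  -- Neumann condition for ρ
  have hNρ : ∀ x ∈ frontier Ω, fderiv ℝ ρ x (ν x) = 0 := by
    intro x hx
    have hder : HasFDerivAt ρ
        ((φ x * φ x) • fderiv ℝ ψ x + ψ x • (φ x • fderiv ℝ φ x + φ x • fderiv ℝ φ x)) x :=
      ((hφd x).hasFDerivAt.mul (hφd x).hasFDerivAt).mul (hψd x).hasFDerivAt
    rw [hder.fderiv]
    simp [hNφ x hx, hNψ x hx]
  -- basic bounds
  have hM1nn : 0 ≤ M1 := le_trans (norm_nonneg _) (hM1 0)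
  have hM2nn : 0 ≤ M2 := le_trans (Real.sqrt_nonneg _) (hM2 0)
  have habs2 : ∀ a b : ℝ, |a| ≤ b → a^2 ≤ b^2 := by
    intro a b h
    obtain ⟨h1, h2⟩ := abs_le.mp h
    nlinarith
  have hnormS : ∀ i : Fin 2, ‖S i‖ = 1 := by
    intro i; rw [hSdef]; simp
  have hu : ∀ (x : E2) (i : Fin 2), (fderiv ℝ φ x (S i))^2 ≤ M1^2 := by
    intro x i
    apply habs2
    calc |fderiv ℝ φ x (S i)| = ‖fderiv ℝ φ x (S i)‖ := (Real.norm_eq_abs _).symm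
    _ ≤ ‖fderiv ℝ φ x‖ * ‖S i‖ := (fderiv ℝ φ x).le_opNorm (S i)
    _ = ‖fderiv ℝ φ x‖ := by rw [hnormS i, mul_one]
    _ ≤ M1 := hM1 x
  have hv : ∀ (x : E2) (i : Fin 2), (fderiv ℝ ψ x (S i))^2 ≤ ‖fderiv ℝ ψ x‖^2 := by
    intro x i
    apply habs2
    calc |fderiv ℝ ψ x (S i)| = ‖fderiv ℝ ψ x (S i)‖ := (Real.norm_eq_abs _).symm
    _ ≤ ‖fderiv ℝ ψ x‖ * ‖S i‖ := (fderiv ℝ ψ x).le_opNorm (S i)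
    _ = ‖fderiv ℝ ψ x‖ := by rw [hnormS i, mul_one]
  have hqφ : ∀ (x : E2) (i j : Fin 2), (pd2 φ x (S i) (S j))^2 ≤ M2^2 := by
    intro x i j
    have hsq : (hessHS φ x)^2 = ∑ i' : Fin 2, ∑ j' : Fin 2, (pd2 φ x (S i') (S j'))^2 := by
      simp only [hessHS, hSdef]
      exact Real.sq_sqrt (by positivity)
    have h1 : (pd2 φ x (S i) (S j))^2 ≤ ∑ j' : Fin 2, (pd2 φ x (S i) (S j'))^2 :=
      Finset.single_le_sum (f := fun j' => (pd2 φ x (S i) (S j'))^2)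
        (fun _ _ => sq_nonneg _) (Finset.mem_univ j)
    have h2 : (∑ j' : Fin 2, (pd2 φ x (S i) (S j'))^2)
        ≤ ∑ i' : Fin 2, ∑ j' : Fin 2, (pd2 φ x (S i') (S j'))^2 :=
      Finset.single_le_sum (f := fun i' => ∑ j' : Fin 2, (pd2 φ x (S i') (S j'))^2)
        (fun _ _ => Finset.sum_nonneg fun _ _ => sq_nonneg _) (Finset.mem_univ i)
    have h3 : (hessHS φ x)^2 ≤ M2^2 := by
      apply habs2
      rw [abs_of_nonneg (by rw [hessHS]; exact Real.sqrt_nonneg _)]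
      exact hM2 x
    linarith
  -- continuity
  have hcφ : Continuous φ := hφ.continuous
  have hcψ : Continuous ψ := hψ.continuous
  have hcN : Continuous fun x => ‖fderiv ℝ ψ x‖ :=
    ((hψ.fderiv_right (m := 1) (by norm_num)).continuous).norm
  have hcρ : Continuous ρ := hρ2.continuous
  have hcpd2ψ : ∀ v w : E2, Continuous fun x => pd2 ψ x v w := fun v w => cont_pd2 hψ v w
  have hcpd2ρ : ∀ v w : E2, Continuous fun x => pd2 ρ x v w := fun v w => cont_pd2 hρ2 v w
  have hclapρ : Continuous fun x => lap ρ x := by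
    simp only [lap]
    exact continuous_finset_sum _ fun i _ => hcpd2ρ _ _
  have hclapψ : Continuous fun x => lap ψ x := by
    simp only [lap]
    exact continuous_finset_sum _ fun i _ => hcpd2ψ _ _
  have intLap : IntegrableOn (fun x => (lap ρ x)^2) Ω :=
    integrableOn_of_cont (hclapρ.pow 2) hΩb
  have intρ2 : IntegrableOn (fun x => (ρ x)^2) Ω :=
    integrableOn_of_cont (hcρ.pow 2) hΩb
  set V : E2 → ℝ := fun x => M1^2*‖fderiv ℝ ψ x‖^2 + (M1^4+M2^2)*(ψ x)^2 with hVdef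
  have hcV : Continuous V := by
    rw [hVdef]
    exact (continuous_const.mul (hcN.pow 2)).add (continuous_const.mul (hcψ.pow 2))
  -- abbreviations
  set Q := ∫ x in Ω ∩ T, ‖fderiv ℝ ψ x‖^2 with hQdef
  set Rr := ∫ x in Ω ∩ T, (ψ x)^2 with hRdef
  set P := ∫ x in Ω, (φ x)^4 * (lap ψ x)^2 with hPdef
  have hQ0 : 0 ≤ Q := by
    rw [hQdef]; exact setIntegral_nonneg (hΩm.inter hTm) fun x _ => by positivity
  have hR0 : 0 ≤ Rr := by
    rw [hRdef]; exact setIntegral_nonneg (hΩm.inter hTm) fun x _ => by positivity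
  have hP0 : 0 ≤ P := by
    rw [hPdef]; exact setIntegral_nonneg hΩm fun x _ => by positivity
  have iQ : IntegrableOn (fun x => ‖fderiv ℝ ψ x‖^2) (Ω ∩ T) :=
    integrableOn_of_cont (hcN.pow 2) hΩTb
  have iR : IntegrableOn (fun x => (ψ x)^2) (Ω ∩ T) :=
    integrableOn_of_cont (hcψ.pow 2) hΩTb
  have hJV : (∫ x in Ω ∩ T, V x) = M1^2*Q + (M1^4+M2^2)*Rr := by
    calc (∫ x in Ω ∩ T, V x)
        = ∫ x in Ω ∩ T, (M1^2*‖fderiv ℝ ψ x‖^2 + (M1^4+M2^2)*(ψ x)^2) := rfl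
    _ = (∫ x in Ω ∩ T, M1^2*‖fderiv ℝ ψ x‖^2) + ∫ x in Ω ∩ T, (M1^4+M2^2)*(ψ x)^2 :=
        integral_add (iQ.const_mul _) (iR.const_mul _)
    _ = M1^2*Q + (M1^4+M2^2)*Rr := by
        rw [integral_const_mul, integral_const_mul, hQdef, hRdef]
  have hInd : ∀ c : ℝ, (∫ x in Ω, T.indicator (fun y => c * V y) x)
      = c * (M1^2*Q + (M1^4+M2^2)*Rr) := by
    intro c
    rw [setIntegral_indicator hTm, integral_const_mul, hJV]
  have iV : IntegrableOn V Ω := integrableOn_of_cont hcV hΩb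
  have iIndc : ∀ c : ℝ, IntegrableOn (T.indicator (fun y => c * V y)) Ω := by
    intro c
    exact (iV.const_mul c).indicator hTm
  -- step 1
  have step1 : ∀ i j : Fin 2,
      (∫ x in Ω, (φ x)^4 * (pd2 ψ x (S i) (S j))^2)
        ≤ 4*(∫ x in Ω, (pd2 ρ x (S i) (S j))^2) + 32*(M1^2*Q + (M1^4+M2^2)*Rr) := by
    intro i j
    have hmono : ∀ x, (φ x)^4 * (pd2 ψ x (S i) (S j))^2
        ≤ 4*(pd2 ρ x (S i) (S j))^2 + T.indicator (fun y => 32 * V y) x := by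
      intro x
      by_cases hx : x ∈ T
      · rw [Set.indicator_of_mem hx]
        have hD := pd2_prod hφ hψ x (S i) (S j)
        rw [← hρdef] at hD
        have hpt := ptwise1 (φ x) (pd2 ψ x (S i) (S j)) (pd2 ρ x (S i) (S j))
          (fderiv ℝ φ x (S i)) (fderiv ℝ φ x (S j))
          (fderiv ℝ ψ x (S i)) (fderiv ℝ ψ x (S j))
          (pd2 φ x (S i) (S j)) (ψ x) (‖fderiv ℝ ψ x‖) M1 M2
          (hφ01 x).1 (hφ01 x).2 (hu x i) (hu x j) (hv x i) (hv x j) (hqφ x i j) hD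
        have hVx : 32 * V x = 32*(M1^2*‖fderiv ℝ ψ x‖^2 + (M1^4+M2^2)*(ψ x)^2) := by
          rw [hVdef]
        linarith [hpt, hVx.le, hVx.ge]
      · rw [Set.indicator_of_notMem hx]
        have hφ0 : φ x = 0 := image_eq_zero_of_notMem_tsupport (hTdef ▸ hx)
        have hz : (φ x)^4 * (pd2 ψ x (S i) (S j))^2 = 0 := by rw [hφ0]; ring
        rw [hz]
        positivity
    have intL : IntegrableOn (fun x => (φ x)^4 * (pd2 ψ x (S i) (S j))^2) Ω :=
      integrableOn_of_cont ((hcφ.pow 4).mul ((hcpd2ψ _ _).pow 2)) hΩb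
    have intR1 : IntegrableOn (fun x => 4*(pd2 ρ x (S i) (S j))^2) Ω :=
      (integrableOn_of_cont ((hcpd2ρ _ _).pow 2) hΩb).const_mul 4
    have intR : IntegrableOn
        (fun x => 4*(pd2 ρ x (S i) (S j))^2 + T.indicator (fun y => 32 * V y) x) Ω :=
      intR1.add (iIndc 32)
    calc (∫ x in Ω, (φ x)^4 * (pd2 ψ x (S i) (S j))^2)
        ≤ ∫ x in Ω, (4*(pd2 ρ x (S i) (S j))^2 + T.indicator (fun y => 32 * V y) x) :=
          setIntegral_mono intL intR hmono
    _ = (∫ x in Ω, 4*(pd2 ρ x (S i) (S j))^2) + ∫ x in Ω, T.indicator (fun y => 32 * V y) x :=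
          integral_add intR1 (iIndc 32)
    _ = 4*(∫ x in Ω, (pd2 ρ x (S i) (S j))^2) + 32*(M1^2*Q + (M1^4+M2^2)*Rr) := by
          rw [integral_const_mul, hInd 32]
  -- step 2 : elliptic estimate for ρ (note how the hypothesis parses!)
  have step2 : ∀ i j : Fin 2,
      (∫ x in Ω, (pd2 ρ x (S i) (S j))^2)
        ≤ c1 * ((∫ x in Ω, (lap ρ x)^2) + (c1 * ∫ x in Ω, (ρ x)^2) * voln) := by
    intro i j
    have h := hEll ρ hρ2 hNρ i j
    have hsplit : (∫ x in Ω, ((lap ρ x)^2 + c1 * ∫ y in Ω, (ρ y)^2))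
        = (∫ x in Ω, (lap ρ x)^2) + (c1 * ∫ y in Ω, (ρ y)^2) * voln := by
      rw [integral_add intLap (integrableOn_const hfin.ne),
        setIntegral_const, smul_eq_mul, measureReal_def, hvoldef]
      ring
    rw [hsplit] at h
    simpa [hSdef] using h
  -- step 3
  have step3 : (∫ x in Ω, (lap ρ x)^2) ≤ 3*P + 256*(M1^2*Q + (M1^4+M2^2)*Rr) := by
    have hsubρ : tsupport ρ ⊆ T := by
      rw [hTdef]
      apply closure_mono
      intro y hy
      intro h0
      apply hy
      show ρ y = 0
      rw [hρdef]; simp [h0]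
    have hmono : ∀ x, (lap ρ x)^2
        ≤ 3*((φ x)^4*(lap ψ x)^2) + T.indicator (fun y => 256 * V y) x := by
      intro x
      by_cases hx : x ∈ T
      · rw [Set.indicator_of_mem hx]
        have hD0 := pd2_prod hφ hψ x (S 0) (S 0)
        have hD1 := pd2_prod hφ hψ x (S 1) (S 1)
        rw [← hρdef] at hD0 hD1
        have hlψ : lap ψ x = pd2 ψ x (S 0) (S 0) + pd2 ψ x (S 1) (S 1) := by
          simp [lap, hSdef, Fin.sum_univ_two]
        have hlρ : lap ρ x = pd2 ρ x (S 0) (S 0) + pd2 ρ x (S 1) (S 1) := by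
          simp [lap, hSdef, Fin.sum_univ_two]
        have hL : lap ρ x =
            (φ x*φ x*(lap ψ x) + 2*(φ x)*(fderiv ℝ φ x (S 0))*(fderiv ℝ ψ x (S 0))
              + 2*(φ x)*(fderiv ℝ φ x (S 0))*(fderiv ℝ ψ x (S 0))
              + (2*(fderiv ℝ φ x (S 0))*(fderiv ℝ φ x (S 0)) + 2*(φ x)*(pd2 φ x (S 0) (S 0)))*(ψ x))
          + (φ x*φ x*(lap ψ x) + 2*(φ x)*(fderiv ℝ φ x (S 1))*(fderiv ℝ ψ x (S 1))
              + 2*(φ x)*(fderiv ℝ φ x (S 1))*(fderiv ℝ ψ x (S 1))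
              + (2*(fderiv ℝ φ x (S 1))*(fderiv ℝ φ x (S 1)) + 2*(φ x)*(pd2 φ x (S 1) (S 1)))*(ψ x))
          - φ x*φ x*(lap ψ x) := by
          rw [hlρ, hD0, hD1, hlψ]; ring
        have hpt := ptwise2 (φ x) (lap ψ x) (lap ρ x)
          (fderiv ℝ φ x (S 0)) (fderiv ℝ φ x (S 1))
          (fderiv ℝ ψ x (S 0)) (fderiv ℝ ψ x (S 1))
          (pd2 φ x (S 0) (S 0)) (pd2 φ x (S 1) (S 1)) (ψ x) (‖fderiv ℝ ψ x‖) M1 M2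
          (hφ01 x).1 (hφ01 x).2 (hu x 0) (hu x 1) (hv x 0) (hv x 1)
          (hqφ x 0 0) (hqφ x 1 1) hL
        have hVx : 256 * V x = 256*(M1^2*‖fderiv ℝ ψ x‖^2 + (M1^4+M2^2)*(ψ x)^2) := by
          rw [hVdef]
        linarith [hpt, hVx.le, hVx.ge]
      · rw [Set.indicator_of_notMem hx]
        have hxρ : x ∉ tsupport ρ := fun h => hx (hsubρ h)
        have hlρ0 : lap ρ x = 0 := by
          simp [lap, Fin.sum_univ_two, pd2_eq_zero_of_nmem hxρ]
        rw [hlρ0]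
        have h00 : (0:ℝ)^2 = 0 := by norm_num
        rw [h00]
        positivity
    have intR1 : IntegrableOn (fun x => 3*((φ x)^4*(lap ψ x)^2)) Ω :=
      (integrableOn_of_cont ((hcφ.pow 4).mul (hclapψ.pow 2)) hΩb).const_mul 3
    have e1 : (∫ x in Ω, (lap ρ x)^2)
        ≤ ∫ x in Ω, (3*((φ x)^4*(lap ψ x)^2) + T.indicator (fun y => 256 * V y) x) :=
      setIntegral_mono intLap (intR1.add (iIndc 256)) hmono
    have e2 : (∫ x in Ω, (3*((φ x)^4*(lap ψ x)^2) + T.indicator (fun y => 256 * V y) x))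
        = (∫ x in Ω, 3*((φ x)^4*(lap ψ x)^2)) + ∫ x in Ω, T.indicator (fun y => 256 * V y) x :=
      integral_add intR1 (iIndc 256)
    have e3 : (∫ x in Ω, 3*((φ x)^4*(lap ψ x)^2)) = 3*P := by
      rw [integral_const_mul, hPdef]
    have e4 := hInd 256
    rw [e2, e3, e4] at e1
    exact e1
  -- step 4
  have step4 : (∫ x in Ω, (ρ x)^2) ≤ Rr := by
    have hmono : ∀ x, (ρ x)^2 ≤ T.indicator (fun y => (ψ y)^2) x := by
      intro x
      by_cases hx : x ∈ T
      · rw [Set.indicator_of_mem hx]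
        have h1 := (hφ01 x).1
        have h2 := (hφ01 x).2
        have he : (ρ x)^2 = (φ x)^4*(ψ x)^2 := by rw [hρdef]; ring
        rw [he]
        have ha : φ x * φ x ≤ 1 := by nlinarith
        have hp4 : (φ x)^4 ≤ 1 := by
          nlinarith [mul_le_mul ha ha (mul_nonneg h1 h1) zero_le_one]
        calc (φ x)^4*(ψ x)^2 ≤ 1*(ψ x)^2 := mul_le_mul_of_nonneg_right hp4 (sq_nonneg _)
        _ = (ψ x)^2 := one_mul _
      · rw [Set.indicator_of_notMem hx]
        have hφ0 : φ x = 0 := image_eq_zero_of_notMem_tsupport (hTdef ▸ hx)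
        have he : (ρ x)^2 = 0 := by rw [hρdef]; simp [hφ0]
        rw [he]
    have intR : IntegrableOn (T.indicator fun y => (ψ y)^2) Ω :=
      (integrableOn_of_cont (hcψ.pow 2) hΩb).indicator hTm
    calc (∫ x in Ω, (ρ x)^2) ≤ ∫ x in Ω, T.indicator (fun y => (ψ y)^2) x :=
        setIntegral_mono intρ2 intR hmono
    _ = Rr := by rw [setIntegral_indicator hTm, hRdef]
  -- decompose LHS
  have hesssum : ∀ x, (φ x)^4 * (hessHS ψ x)^2
      = ∑ i : Fin 2, ∑ j : Fin 2, (φ x)^4 * (pd2 ψ x (S i) (S j))^2 := by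
    intro x
    have hsq : (hessHS ψ x)^2 = ∑ i : Fin 2, ∑ j : Fin 2, (pd2 ψ x (S i) (S j))^2 := by
      simp only [hessHS, hSdef]
      exact Real.sq_sqrt (by positivity)
    rw [hsq, Finset.mul_sum]
    congr 1
    funext i
    rw [Finset.mul_sum]
  have intij : ∀ i j : Fin 2,
      IntegrableOn (fun x => (φ x)^4 * (pd2 ψ x (S i) (S j))^2) Ω := fun i j =>
    integrableOn_of_cont ((hcφ.pow 4).mul ((hcpd2ψ _ _).pow 2)) hΩb
  have hLHS : (∫ x in Ω, (φ x)^4 * (hessHS ψ x)^2)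
      = ∑ i : Fin 2, ∑ j : Fin 2, ∫ x in Ω, (φ x)^4 * (pd2 ψ x (S i) (S j))^2 := by
    rw [show (fun x => (φ x)^4 * (hessHS ψ x)^2)
        = fun x => ∑ i : Fin 2, ∑ j : Fin 2, (φ x)^4 * (pd2 ψ x (S i) (S j))^2
        from funext hesssum]
    rw [integral_finset_sum _ (fun i _ => integrable_finset_sum _ (fun j _ => intij i j))]
    exact Finset.sum_congr rfl fun i _ => integral_finset_sum _ fun j _ => intij i j
  -- combine per (i,j)
  have hcomb : ∀ i j : Fin 2,
      (∫ x in Ω, (φ x)^4 * (pd2 ψ x (S i) (S j))^2)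
        ≤ 12*c1*P + (1024*c1+32)*(M1^2*Q + (M1^4+M2^2)*Rr) + 4*(c1*c1*voln)*Rr := by
    intro i j
    have h1 := step1 i j
    have h2 := step2 i j
    have h3 := mul_le_mul_of_nonneg_left step3 hc1.le
    have h4 := mul_le_mul_of_nonneg_left step4
      (by positivity : (0:ℝ) ≤ c1*c1*voln)
    nlinarith [h1, h2, h3, h4]
  have hM1sq : M1^2 ≤ M2^2 + M1^4 + 1 := by nlinarith [sq_nonneg (M1^2-1), sq_nonneg M2]
  have k1 : 4096*c1+128 ≤ Γ0 := by linarith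
  have k3 : (4096*c1+128)*M1^2 ≤ Γ0*(M2^2+M1^4+1) :=
    mul_le_mul k1 hM1sq (sq_nonneg _) hΓ0pos.le
  have k4 : (4096*c1+128)*M1^2*Q ≤ Γ0*(M2^2+M1^4+1)*Q :=
    mul_le_mul_of_nonneg_right k3 hQ0
  have a2 : 16*(c1*c1*voln) ≤ Γ0 := by
    have b1 : c1*c1 ≤ (c1+1)*(c1+1) := by nlinarith
    have b2 : c1*c1*voln ≤ (c1+1)*(c1+1)*voln :=
      mul_le_mul_of_nonneg_right b1 hvnn
    have b3 : (c1+1)*(c1+1)*voln ≤ (c1+1)*(c1+1)*(voln+1) := by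
      have hpp : (0:ℝ) < (c1+1)*(c1+1) := mul_pos (by linarith) (by linarith)
      nlinarith
    have b4 : (0:ℝ) ≤ (c1+1)*(c1+1)*(voln+1) :=
      mul_nonneg (mul_nonneg (by linarith) (by linarith)) (by linarith)
    rw [hΓ0def]
    nlinarith
  have k5 : (4096*c1+128)*(M1^4+M2^2) + 16*(c1*c1*voln) ≤ Γ0*(M2^2+M1^4+1) := by
    have a1 : (4096*c1+128)*(M1^4+M2^2) ≤ Γ0*(M1^4+M2^2) :=
      mul_le_mul_of_nonneg_right k1 (by positivity)
    nlinarith [a1, a2]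
  have k6 : ((4096*c1+128)*(M1^4+M2^2) + 16*(c1*c1*voln))*Rr ≤ Γ0*(M2^2+M1^4+1)*Rr :=
    mul_le_mul_of_nonneg_right k5 hR0
  have k7 : 48*c1*P ≤ Γ0*P := mul_le_mul_of_nonneg_right (by linarith) hP0
  have main : (∫ x in Ω, (φ x)^4 * (hessHS ψ x)^2)
      ≤ Γ0*P + Γ0*(M2^2+M1^4+1)*(Q+Rr) := by
    rw [hLHS]
    rw [Fin.sum_univ_two]
    rw [Fin.sum_univ_two]
    rw [Fin.sum_univ_two]
    have c00 := hcomb 0 0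
    have c01 := hcomb 0 1
    have c10 := hcomb 1 0
    have c11 := hcomb 1 1
    linarith [c00, c01, c10, c11, k4, k6, k7]
  have hΓ01 : (1:ℝ) ≤ Γ0 := by linarith
  have hivol : (0:ℝ) ≤ 1/voln := by positivity
  have hG0 : Γ0 ≤ Γ3 := by
    have h := mul_nonneg hΓ0pos.le hivol
    have he : Γ3 = Γ0 + Γ0*(1/voln) := by rw [hΓdef]; ring
    linarith
  have hG1 : Γ0 ≤ Γ3*voln := by
    have he : Γ3*voln = Γ0*voln + Γ0 := by rw [hΓdef]; field_simp
    have hpp := mul_pos hΓ0pos hvolpos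
    linarith
  have hΓ3pos : (0:ℝ) < Γ3 := lt_of_lt_of_le hΓ0pos hG0
  have hKnn : (0:ℝ) ≤ (M2^2+M1^4+1)*(Q+Rr) := mul_nonneg (by positivity) (by linarith)
  have hGG : Γ0 ≤ Γ3*(Γ3*voln) := by
    have a : Γ0*Γ0 ≤ Γ3*(Γ3*voln) := mul_le_mul hG0 hG1 hΓ0pos.le hΓ3pos.le
    have b : Γ0*1 ≤ Γ0*Γ0 := mul_le_mul_of_nonneg_left hΓ01 hΓ0pos.le
    linarith
  have hK : Γ0*((M2^2+M1^4+1)*(Q+Rr)) ≤ (Γ3*(Γ3*voln))*((M2^2+M1^4+1)*(Q+Rr)) :=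
    mul_le_mul_of_nonneg_right hGG hKnn
  have hPP : Γ0*P ≤ Γ3*P := mul_le_mul_of_nonneg_right hG0 hP0
  have intP : IntegrableOn (fun x => (φ x)^4*(lap ψ x)^2) Ω :=
    integrableOn_of_cont ((hcφ.pow 4).mul (hclapψ.pow 2)) hΩb
  have hDconst : (∫ x in Ω, ((φ x)^4*(lap ψ x)^2 + Γ3*(M2^2+M1^4+1)*(Q+Rr)))
      = P + Γ3*(M2^2+M1^4+1)*(Q+Rr)*voln := by
    rw [integral_add intP (integrableOn_const hfin.ne)]
    rw [setIntegral_const, smul_eq_mul, measureReal_def, hPdef, hvoldef]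
    ring
  calc (∫ x in Ω, (φ x)^4 * (hessHS ψ x)^2)
      ≤ Γ0*P + Γ0*((M2^2+M1^4+1)*(Q+Rr)) := by linarith [main]
  _ ≤ Γ3*P + (Γ3*(Γ3*voln))*((M2^2+M1^4+1)*(Q+Rr)) := by linarith
  _ = Γ3 * (P + Γ3*(M2^2+M1^4+1)*(Q+Rr)*voln) := by ring
  _ = Γ3 * ∫ x in Ω, ((φ x)^4*(lap ψ x)^2 + Γ3*(M2^2+M1^4+1)*(Q+Rr)) := by
      rw [hDconst]
end

section
/- Let \Omega \subset \mathbb{R}^2 be bounded with the Ehrling-type inequality of Lemma 2.2 (constant \Gamma_2) available. Fix \delta \in (0,1) with 14\Gamma_2\delta \le 1/2. Suppose u : \Omega\times(t_0,T) \to (0,\infty) satisfies \int_\Omega u(\cdot,t) = m for all t, and \int_{B_R(x_0)\cap\Omega} u(\cdot,t)\ln(u(\cdot,t)+e) \le \delta\ln\frac{T}{T-t} for all t \in (t_0,T). Then there is \Gamma_6 > 0 (depending on m, |\Omega|, T, \Gamma_2) such that for every \varphi \in C^1(\bar\Omega) with \mathrm{supp}\,\varphi \subset \bar B_R(x_0)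 and 0 \le \varphi \le 1: 7\int_\Omega \varphi^4 u^2 \le \tfrac12\int_\Omega \varphi^4\frac{|\nabla u|^2}{u} + \Gamma_6(\|\nabla\varphi\|_\infty^2 + 1)(T-t)^{-1/2} for all t \in (t_0,T). -/
open MeasureTheory Metric

/-- Lemma 3.4: under the contradiction hypothesis (H) of slow `L log L` growth
near the blow-up point, the quadratic term `∫ φ⁴ u²` is absorbed into the
Fisher-information dissipation up to an error `Γ6 (‖∇φ‖_∞² + 1)(T-t)^{-1/2}`. -/
theorem stmt_16 (Ω : Set (EuclideanSpace ℝ (Fin 2)))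
    (hΩo : IsOpen Ω) (hΩb : Bornology.IsBounded Ω)
    (Γ2 : ℝ) (hΓ2 : 0 < Γ2)
    (hEhrling : ∀ φ ψ : EuclideanSpace ℝ (Fin 2) → ℝ,
      ContDiff ℝ 1 φ → ContDiff ℝ 1 ψ →
      (∀ x, φ x ∈ Set.Icc (0:ℝ) 1) → (∀ x, 0 < ψ x) →
      ∀ M : ℝ, (∀ x, ‖fderiv ℝ φ x‖ ≤ M) → ∀ η : ℝ, 0 < η →
        ∫ x in Ω, (φ x)^4 * (ψ x)^2
          ≤ η * ∫ x in Ω, (φ x)^4 * (‖fderiv ℝ ψ x‖^2 / ψ x)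
            + 3 * (volume Ω).toReal *
                Real.exp ((Γ2 / η) *
                  ∫ x in Ω ∩ tsupport φ, ψ x * Real.log (ψ x + Real.exp 1))
            + Γ2 * (M^2 + 1) * (∫ x in Ω, ψ x)^2)
    (δ : ℝ) (hδ0 : 0 < δ) (hδ1 : δ < 1) (hδΓ : 14 * Γ2 * δ ≤ 1/2)
    (T t0 : ℝ) (hT : 0 < T) (ht0 : 0 ≤ t0) (ht0T : t0 < T)
    (u : ℝ → EuclideanSpace ℝ (Fin 2) → ℝ)
    (hureg : ∀ t ∈ Set.Ioo t0 T, ContDiff ℝ 1 (u t))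
    (hupos : ∀ t ∈ Set.Ioo t0 T, ∀ x, 0 < u t x)
    (m : ℝ) (hmass : ∀ t ∈ Set.Ioo t0 T, ∫ x in Ω, u t x = m)
    (x0 : EuclideanSpace ℝ (Fin 2)) (R : ℝ) (hR : 0 < R)
    (hH : ∀ t ∈ Set.Ioo t0 T,
      ∫ x in ball x0 R ∩ Ω, u t x * Real.log (u t x + Real.exp 1)
        ≤ δ * Real.log (T / (T - t))) :
    ∃ Γ6 > (0:ℝ), ∀ φ : EuclideanSpace ℝ (Fin 2) → ℝ,
      ContDiff ℝ 1 φ → tsupport φ ⊆ closedBall x0 R →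
      (∀ x, φ x ∈ Set.Icc (0:ℝ) 1) →
      ∀ M : ℝ, (∀ x, ‖fderiv ℝ φ x‖ ≤ M) →
      ∀ t ∈ Set.Ioo t0 T,
        7 * ∫ x in Ω, (φ x)^4 * (u t x)^2
          ≤ (1/2) * ∫ x in Ω, (φ x)^4 * (‖fderiv ℝ (u t) x‖^2 / u t x)
            + Γ6 * (M^2 + 1) * (T - t) ^ (-(1:ℝ)/2) := by
  set V := (volume Ω).toReal with hVdef
  have hV : 0 ≤ V := ENNReal.toReal_nonneg
  refine ⟨(21 * V + 7 * Γ2 * (m ^ 2 + 1)) * T ^ ((1:ℝ)/2) + 1, by positivity, ?_⟩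
  intro φ hφ hsupp hφ01 M hM t ht
  have htpos : 0 < t := lt_of_le_of_lt ht0 ht.1
  have hTt : 0 < T - t := sub_pos.mpr ht.2
  have hucont : Continuous (u t) := (hureg t ht).continuous
  have hpos := hupos t ht
  -- the L log L integrand
  set f : EuclideanSpace ℝ (Fin 2) → ℝ :=
    fun x => u t x * Real.log (u t x + Real.exp 1) with hfdef
  have hfc : Continuous f :=
    hucont.mul ((hucont.add continuous_const).log
      (fun x => (add_pos (hpos x) (Real.exp_pos 1)).ne'))
  have hf0 : ∀ x, 0 ≤ f x := by
    intro x
    have h1 : (1:ℝ) ≤ u t x + Real.exp 1 := by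
      have := hpos x; have := Real.exp_one_gt_d9; linarith
    exact mul_nonneg (hpos x).le (Real.log_nonneg h1)
  -- integrability on the big set
  have hint : IntegrableOn f (closedBall x0 R ∩ Ω) volume :=
    ((hfc.continuousOn.integrableOn_compact (isCompact_closedBall x0 R)).mono_set
      Set.inter_subset_left)
  have hsub : Ω ∩ tsupport φ ⊆ closedBall x0 R ∩ Ω := by
    rintro x ⟨hx1, hx2⟩; exact ⟨hsupp hx2, hx1⟩
  -- from the hypothesis (H): bound on the local entropy
  have hIbound :
      (∫ x in Ω ∩ tsupport φ, f x) ≤ δ * Real.log (T / (T - t)) := by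
    have h1 : (∫ x in Ω ∩ tsupport φ, f x) ≤ ∫ x in closedBall x0 R ∩ Ω, f x := by
      refine setIntegral_mono_set hint (Filter.Eventually.of_forall hf0) ?_
      exact Filter.Eventually.of_forall hsub
    have hsph : volume (sphere x0 R) = 0 := Measure.addHaar_sphere (μ := (volume : Measure (EuclideanSpace ℝ (Fin 2)))) x0 R
    have hae : (ball x0 R ∩ Ω : Set (EuclideanSpace ℝ (Fin 2))) =ᵐ[(volume : Measure (EuclideanSpace ℝ (Fin 2)))] (closedBall x0 R ∩ Ω : Set (EuclideanSpace ℝ (Fin 2))) := by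
      refine Filter.eventuallyEq_set.mpr ?_
      filter_upwards [measure_eq_zero_iff_ae_notMem.mp hsph] with x hx
      simp only [Set.mem_inter_iff, mem_ball, mem_closedBall, mem_sphere] at *
      constructor
      · rintro ⟨h, h2⟩; exact ⟨h.le, h2⟩
      · rintro ⟨h, h2⟩; exact ⟨lt_of_le_of_ne h hx, h2⟩
    have h2 : (∫ x in closedBall x0 R ∩ Ω, f x) = ∫ x in ball x0 R ∩ Ω, f x :=
      (setIntegral_congr_set hae).symm
    calc (∫ x in Ω ∩ tsupport φ, f x) ≤ ∫ x in closedBall x0 R ∩ Ω, f x := h1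
      _ = ∫ x in ball x0 R ∩ Ω, f x := h2
      _ ≤ δ * Real.log (T / (T - t)) := hH t ht
  have hLog0 : 0 ≤ Real.log (T / (T - t)) :=
    Real.log_nonneg ((one_le_div hTt).mpr (by linarith))
  -- apply the Ehrling-type inequality with η = 1/14
  have hE := hEhrling φ (u t) hφ (hureg t ht) hφ01 hpos M hM (1/14) (by norm_num)
  rw [hmass t ht] at hE
  have h14 : Γ2 / (1/14 : ℝ) = 14 * Γ2 := by ring
  rw [h14] at hE
  -- bound the exponential
  have harg : 14 * Γ2 * (∫ x in Ω ∩ tsupport φ, f x)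
      ≤ (1/2) * Real.log (T / (T - t)) := by
    nlinarith [mul_le_mul_of_nonneg_left hIbound (by positivity : (0:ℝ) ≤ 14 * Γ2)]
  have hexpeq : Real.exp ((1/2) * Real.log (T / (T - t)))
      = T ^ ((1:ℝ)/2) * (T - t) ^ (-(1:ℝ)/2) := by
    rw [mul_comm, ← Real.rpow_def_of_pos (div_pos hT hTt),
      Real.div_rpow hT.le hTt.le, neg_div, Real.rpow_neg hTt.le, div_eq_mul_inv]
  set P : ℝ := (T - t) ^ (-(1:ℝ)/2) with hPdef
  set Q : ℝ := T ^ ((1:ℝ)/2) with hQdef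
  have hexp : Real.exp (14 * Γ2 * (∫ x in Ω ∩ tsupport φ, f x)) ≤ Q * P := by
    rw [← hexpeq]; exact Real.exp_le_exp.mpr harg
  have hPpos : 0 < P := by rw [hPdef]; positivity
  have hQpos : 0 < Q := by rw [hQdef]; positivity
  have h1QP : 1 ≤ Q * P := by
    have h1 : (T - t) ^ ((1:ℝ)/2) ≤ T ^ ((1:ℝ)/2) :=
      Real.rpow_le_rpow hTt.le (by linarith) (by norm_num)
    have h2 : P = ((T - t) ^ ((1:ℝ)/2))⁻¹ := by
      rw [hPdef, neg_div, Real.rpow_neg hTt.le]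
    have h3 : 0 < (T - t) ^ ((1:ℝ)/2) := by positivity
    rw [h2, ← div_eq_mul_inv, le_div_iff₀ h3, one_mul]
    exact h1
  have hM2 : (0:ℝ) ≤ M ^ 2 := sq_nonneg M
  have hexp0 : 0 < Real.exp (14 * Γ2 * (∫ x in Ω ∩ tsupport φ, f x)) :=
    Real.exp_pos _
  -- the Fisher-information integrand and its integrability
  set g : EuclideanSpace ℝ (Fin 2) → ℝ :=
    fun x => (φ x)^4 * (‖fderiv ℝ (u t) x‖^2 / u t x) with hgdef
  have hgc : Continuous g := by
    apply ((hφ.continuous.pow 4).mul _)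
    exact (((hureg t ht).continuous_fderiv one_ne_zero).norm.pow 2).div hucont
      (fun x => (hpos x).ne')
  have hμΩ : volume Ω < ⊤ := hΩb.measure_lt_top
  have hginteg : IntegrableOn g Ω volume :=
    (hgc.continuousOn.integrableOn_compact hΩb.isCompact_closure).mono_set
      subset_closure
  have hsplit : ∀ c : ℝ, (∫ x in Ω, (g x + c)) = (∫ x in Ω, g x) + c * V := by
    intro c
    rw [integral_add hginteg (integrableOn_const hμΩ.ne),
      setIntegral_const, smul_eq_mul, mul_comm, measureReal_def]
  -- rewrite hE using the splitting
  set e1 : ℝ := 3 * V * Real.exp (14 * Γ2 * (∫ x in Ω ∩ tsupport φ, f x)) with he1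
  set e2 : ℝ := Γ2 * (M ^ 2 + 1) * m ^ 2 with he2
  have hEsplit : (∫ x in Ω, (φ x)^4 * (u t x)^2)
      ≤ (1/14) * ((∫ x in Ω, g x) + (e1 + e2) * V) := by
    have hbody : (∫ x in Ω, ((φ x)^4 * (‖fderiv ℝ (u t) x‖^2 / u t x) + e1 + e2))
        = (∫ x in Ω, g x) + (e1 + e2) * V := by
      rw [show (fun x => (φ x)^4 * (‖fderiv ℝ (u t) x‖^2 / u t x) + e1 + e2)
          = fun x => g x + (e1 + e2) by funext x; rw [hgdef]; ring]
      exact hsplit (e1 + e2)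
    calc (∫ x in Ω, (φ x)^4 * (u t x)^2)
        ≤ (1/14) * ∫ x in Ω, ((φ x)^4 * (‖fderiv ℝ (u t) x‖^2 / u t x)
            + e1 + e2) := hE
      _ = (1/14) * ((∫ x in Ω, g x) + (e1 + e2) * V) := by rw [hbody]
  -- the constant comparison
  set Γ6 : ℝ := (21 * V + 7 * Γ2 * (m ^ 2 + 1)) * Q + 1 with hΓ6
  have hconst : e1 + e2 ≤ Γ6 * (M ^ 2 + 1) * P := by
    have hQP : (0:ℝ) ≤ Q * P := (mul_pos hQpos hPpos).le
    have h1' : (1:ℝ) ≤ M ^ 2 + 1 := by linarith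
    have b1 : e1 ≤ 3 * V * (Q * P) := by
      have := mul_le_mul_of_nonneg_left hexp (by positivity : (0:ℝ) ≤ 3 * V)
      rw [he1]; linarith
    have c1 : e1 ≤ 3 * V * (M ^ 2 + 1) * (Q * P) := by
      refine b1.trans ?_
      have h := mul_le_mul_of_nonneg_right
        (mul_le_mul_of_nonneg_left h1' (by positivity : (0:ℝ) ≤ 3 * V)) hQP
      calc 3 * V * (Q * P) = 3 * V * 1 * (Q * P) := by ring
        _ ≤ 3 * V * (M ^ 2 + 1) * (Q * P) := h
    have b2 : e2 ≤ Γ2 * (M ^ 2 + 1) * m ^ 2 * (Q * P) := by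
      rw [he2]
      exact le_mul_of_one_le_right
        (mul_nonneg (mul_nonneg hΓ2.le (by positivity)) (sq_nonneg m)) h1QP
    have c2 : e2 ≤ Γ2 * (m ^ 2 + 1) * (M ^ 2 + 1) * (Q * P) := by
      refine b2.trans ?_
      refine mul_le_mul_of_nonneg_right ?_ hQP
      have hmm : m ^ 2 ≤ m ^ 2 + 1 := by linarith
      have := mul_le_mul_of_nonneg_left hmm
        (mul_nonneg hΓ2.le (by positivity : (0:ℝ) ≤ M ^ 2 + 1))
      calc Γ2 * (M ^ 2 + 1) * m ^ 2 = Γ2 * (M ^ 2 + 1) * m ^ 2 := rfl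
        _ ≤ Γ2 * (M ^ 2 + 1) * (m ^ 2 + 1) := this
        _ = Γ2 * (m ^ 2 + 1) * (M ^ 2 + 1) := by ring
    have hsum : e1 + e2 ≤ (3 * V + Γ2 * (m ^ 2 + 1)) * (M ^ 2 + 1) * (Q * P) := by
      have : 3 * V * (M ^ 2 + 1) * (Q * P) + Γ2 * (m ^ 2 + 1) * (M ^ 2 + 1) * (Q * P)
          = (3 * V + Γ2 * (m ^ 2 + 1)) * (M ^ 2 + 1) * (Q * P) := by ring
      linarith
    have t1 : (0:ℝ) ≤ 18 * V + 6 * (Γ2 * (m ^ 2 + 1)) := by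
      have : (0:ℝ) ≤ Γ2 * (m ^ 2 + 1) := mul_nonneg hΓ2.le (by positivity)
      linarith
    have t2 : (0:ℝ) ≤ (18 * V + 6 * (Γ2 * (m ^ 2 + 1))) * Q + 1 := by
      have := mul_nonneg t1 hQpos.le; linarith
    have t3 : (0:ℝ) ≤ (M ^ 2 + 1) * P := mul_nonneg (by positivity) hPpos.le
    have hnn : (0:ℝ) ≤ ((18 * V + 6 * (Γ2 * (m ^ 2 + 1))) * Q + 1) * ((M ^ 2 + 1) * P) :=
      mul_nonneg t2 t3
    have hre : Γ6 * (M ^ 2 + 1) * P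
        = (3 * V + Γ2 * (m ^ 2 + 1)) * (M ^ 2 + 1) * (Q * P)
          + ((18 * V + 6 * (Γ2 * (m ^ 2 + 1))) * Q + 1) * ((M ^ 2 + 1) * P) := by
      rw [hΓ6]; ring
    linarith
  -- conclude
  have hgoalsplit : (∫ x in Ω, ((φ x)^4 * (‖fderiv ℝ (u t) x‖^2 / u t x)
      + Γ6 * (M ^ 2 + 1) * P))
      = (∫ x in Ω, g x) + (Γ6 * (M ^ 2 + 1) * P) * V := by
    rw [show (fun x => (φ x)^4 * (‖fderiv ℝ (u t) x‖^2 / u t x)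
        + Γ6 * (M ^ 2 + 1) * P) = fun x => g x + Γ6 * (M ^ 2 + 1) * P
        by funext x; rw [hgdef]]
    exact hsplit _
  have hfinal : (e1 + e2) * V ≤ (Γ6 * (M ^ 2 + 1) * P) * V :=
    mul_le_mul_of_nonneg_right hconst hV
  calc 7 * ∫ x in Ω, (φ x)^4 * (u t x)^2
      ≤ 7 * ((1/14) * ((∫ x in Ω, g x) + (e1 + e2) * V)) := by linarith
    _ = (1/2) * ((∫ x in Ω, g x) + (e1 + e2) * V) := by ring
    _ ≤ (1/2) * ((∫ x in Ω, g x) + (Γ6 * (M ^ 2 + 1) * P) * V) := by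
        have h := add_le_add_right hfinal (∫ x in Ω, g x)
        exact mul_le_mul_of_nonneg_left h (by norm_num)
    _ = (1/2) * ∫ x in Ω, ((φ x)^4 * (‖fderiv ℝ (u t) x‖^2 / u t x)
        + Γ6 * (M ^ 2 + 1) * P) := by rw [hgoalsplit]
end
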